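/- Let X be a compact Hausdorff topological space, let X₀ be a dense subset of X, and let A be a uniformly bounded set of continuous real-valued functions on X. Suppose that for every sequence (f_m) of elements of A and every sequence (x_n) of points of X₀, whenever both iterated limits lim_n lim_m f_m(x_n) and lim_m lim_n f_m(x_n) exist, they are equal. Then the closure of A in the product topology on ℝ^X is a compact set all of whose elements are continuous functions; that is, A is relatively compact in C(X) equipped with the topology of pointwise convergence. -/

import Mathlib

open Filter Topology Set

/-! Compactness of the pointwise closure is Tychonoff's theorem, since `A` lies in the box
`[-C, C]^X`. A pointwise limit `g` of `A` is continuous as soon as it is continuous along the dense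
set `X₀` at every point `y`. If that fails at `y`, there are points of `X₀` arbitrarily close to `y`
where `g` stays `ε`-far from `g y`, and one chooses alternately `f_m ∈ A` approximating `g` at `y`
and at the points chosen so far, and such a point `x_n` at which the functions chosen so far are
close to their values at `y`. Then `lim_m f_m(x_n) = g(x_n)` while `lim_n f_m(x_n) = f_m(y) → g(y)`;
along a subsequence on which `g(x_n)` converges, the double limit condition forces its limit to be
`g y`, which is impossible. -/

def DoubleLimitCondition {X : Type*} (A : Set (X → ℝ)) (X₀ : Set X) : Prop :=
  ∀ (f : ℕ → X → ℝ), (∀ m, f m ∈ A) →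
    ∀ (x : ℕ → X), (∀ n, x n ∈ X₀) →
    ∀ (c d : ℕ → ℝ) (r s : ℝ),
      (∀ n, Tendsto (fun m => f m (x n)) atTop (𝓝 (c n))) →
      Tendsto c atTop (𝓝 r) →
      (∀ m, Tendsto (fun n => f m (x n)) atTop (𝓝 (d m))) →
      Tendsto d atTop (𝓝 s) →
      r = s

theorem closure_subset_univ_pi_Icc {ι : Type*} {A : Set (ι → ℝ)} {C : ℝ}
    (hbd : ∀ f ∈ A, ∀ i, |f i| ≤ C) : closure A ⊆ univ.pi fun _ => Icc (-C) C :=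
  closure_minimal (fun f hf i _ => abs_le.mp (hbd f hf i)) (isClosed_set_pi fun _ _ => isClosed_Icc)

theorem continuous_of_forall_tendsto_nhdsWithin_of_dense {X Y : Type*} [TopologicalSpace X]
    [TopologicalSpace Y] [T3Space Y] {f : X → Y} {s : Set X} (hs : Dense s)
    (hf : ∀ x, Tendsto f (𝓝[s] x) (𝓝 (f x))) : Continuous f := by
  have hext : extendFrom s f = f := funext fun x => extendFrom_eq (hs x) (hf x)
  rw [← hext]
  exact continuous_extendFrom hs fun x => ⟨f x, hf x⟩

theorem tendsto_of_eventually_dist_lt {α E : Type*} [PseudoMetricSpace E] {l : Filter α}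
    {u : α → E} {a : E} {δ : α → ℝ} (hδ : Tendsto δ l (𝓝 0))
    (hu : ∀ᶠ n in l, dist (u n) a < δ n) : Tendsto u l (𝓝 a) :=
  tendsto_iff_dist_tendsto_zero.mpr <|
    squeeze_zero' (.of_forall fun _ => dist_nonneg) (hu.mono fun _ => le_of_lt) hδ

theorem exists_mem_forall_dist_lt_of_mem_closure {Y ι E : Type*} [TopologicalSpace Y]
    [PseudoMetricSpace E] {S : Set Y} {y : Y} (hy : y ∈ closure S) (s : Finset ι)
    {φ : ι → Y → E} (hφ : ∀ i ∈ s, ContinuousAt (φ i) y) {δ : ℝ} (hδ : 0 < δ) :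
    ∃ x ∈ S, ∀ i ∈ s, dist (φ i x) (φ i y) < δ := by
  have hnear : ∀ᶠ x in 𝓝 y, ∀ i ∈ s, dist (φ i x) (φ i y) < δ :=
    (s.eventually_all).mpr fun i hi => hφ i hi (Metric.ball_mem_nhds _ hδ)
  obtain ⟨x, hx, hxS⟩ := (hnear.and_frequently (mem_closure_iff_frequently.mp hy)).exists
  exact ⟨x, hxS, hx⟩

theorem exists_seq_tendsto_of_mem_closure {X E : Type*} [TopologicalSpace X]
    [PseudoMetricSpace E] {A : Set (X → E)} {g : X → E} {S : Set X} {y : X}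
    (hcont : ∀ f ∈ A, Continuous f) (hg : g ∈ closure A) (hy : y ∈ closure S) :
    ∃ (f : ℕ → X → E) (x : ℕ → X), (∀ m, f m ∈ A) ∧ (∀ n, x n ∈ S) ∧
      (∀ n, Tendsto (fun m => f m (x n)) atTop (𝓝 (g (x n)))) ∧
      (∀ m, Tendsto (fun n => f m (x n)) atTop (𝓝 (f m y))) ∧
      Tendsto (fun m => f m y) atTop (𝓝 (g y)) := by
  classical
  -- A choice `(k, f, x)` is made to precision `1 / (k + 1)`; the levels `k` increase along
  -- the sequence, so the precisions tend to `0`.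
  let tol : ℕ → ℝ := fun k => 1 / (k + 1)
  let P : ℕ × (X → E) × X → Prop := fun p =>
    p.2.1 ∈ A ∧ p.2.2 ∈ S ∧ dist (p.2.1 y) (g y) < tol p.1
  let r : ℕ × (X → E) × X → ℕ × (X → E) × X → Prop := fun p q =>
    p.1 < q.1 ∧ dist (q.2.1 p.2.2) (g p.2.2) < tol q.1 ∧ dist (p.2.1 q.2.2) (p.2.1 y) < tol q.1
  have hstep : ∀ s : Finset (ℕ × (X → E) × X), (∀ p ∈ s, P p) → ∃ q, P q ∧ ∀ p ∈ s, r p q := by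
    intro s hs
    set N := s.sup Prod.fst + 1
    have htol : 0 < tol N := by positivity
    obtain ⟨f, hfA, hf⟩ := exists_mem_forall_dist_lt_of_mem_closure hg
      (insert y (s.image fun p => p.2.2)) (φ := fun x f => f x)
      (fun x _ => (continuous_apply x).continuousAt) htol
    obtain ⟨x, hxS, hx⟩ := exists_mem_forall_dist_lt_of_mem_closure hy
      (s.image fun p => p.2.1) (φ := id)
      (fun h hh => by
        obtain ⟨p, hp, rfl⟩ := Finset.mem_image.mp hh
        exact (hcont _ (hs p hp).1).continuousAt) htol
    refine ⟨(N, f, x), ⟨hfA, hxS, hf y (Finset.mem_insert_self _ _)⟩, fun p hp => ⟨?_, ?_, ?_⟩⟩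
    · exact Nat.lt_succ_of_le (Finset.le_sup hp)
    · exact hf _ (Finset.mem_insert_of_mem (Finset.mem_image_of_mem _ hp))
    · exact hx _ (Finset.mem_image_of_mem _ hp)
  obtain ⟨p, hP, hr⟩ := exists_seq_of_forall_finset_exists P r hstep
  have hk : StrictMono fun n => (p n).1 := fun m n hmn => (hr m n hmn).1
  have htol : Tendsto (fun n => tol (p n).1) atTop (𝓝 0) :=
    tendsto_one_div_add_atTop_nhds_zero_nat.comp hk.tendsto_atTop
  refine ⟨fun m => (p m).2.1, fun n => (p n).2.2, fun m => (hP m).1, fun n => (hP n).2.1,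
    fun n => ?_, fun m => ?_, tendsto_of_eventually_dist_lt htol (.of_forall fun m => (hP m).2.2)⟩
  · exact tendsto_of_eventually_dist_lt htol
      ((eventually_gt_atTop n).mono fun m hm => (hr n m hm).2.1)
  · exact tendsto_of_eventually_dist_lt htol
      ((eventually_gt_atTop m).mono fun n hn => (hr m n hn).2.2)

theorem tendsto_nhdsWithin_of_mem_closure_of_doubleLimitCondition {X : Type*}
    [TopologicalSpace X] {X₀ : Set X} {A : Set (X → ℝ)} {C : ℝ}
    (hcont : ∀ f ∈ A, Continuous f) (hbd : ∀ f ∈ A, ∀ x, |f x| ≤ C)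
    (hdl : DoubleLimitCondition A X₀) {g : X → ℝ} (hg : g ∈ closure A) (y : X) :
    Tendsto g (𝓝[X₀] y) (𝓝 (g y)) := by
  by_contra hgy
  obtain ⟨ε, hε, hfar⟩ : ∃ ε > 0, ∃ᶠ x in 𝓝[X₀] y, ε ≤ dist (g x) (g y) := by
    simpa [Metric.tendsto_nhds] using hgy
  have hy : y ∈ closure {x ∈ X₀ | ε ≤ dist (g x) (g y)} :=
    mem_closure_iff_frequently.mpr <| (frequently_nhdsWithin_iff.mp hfar).mono fun _ h => ⟨h.2, h.1⟩
  obtain ⟨f, x, hfA, hxS, hlim_m, hlim_n, hlim_y⟩ := exists_seq_tendsto_of_mem_closure hcont hg hy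
  obtain ⟨r, -, φ, hφ, hr⟩ := (isCompact_Icc (a := -C) (b := C)).tendsto_subseq (x := g ∘ x)
    fun n => closure_subset_univ_pi_Icc hbd hg (x n) (mem_univ _)
  have hry : r = g y := hdl f hfA (x ∘ φ) (fun n => (hxS (φ n)).1) _ _ r (g y)
    (fun n => hlim_m (φ n)) hr (fun m => (hlim_n m).comp hφ.tendsto_atTop) hlim_y
  have hεr : ε ≤ dist r (g y) :=
    ge_of_tendsto (hr.dist tendsto_const_nhds) (.of_forall fun n => (hxS (φ n)).2)
  rw [hry, dist_self] at hεr
  exact hεr.not_gt hε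

theorem relatively_compact_of_double_limit_general {X : Type*} [TopologicalSpace X]
    (X₀ : Set X) (hX₀ : Dense X₀)
    (A : Set (X → ℝ)) (hcont : ∀ f ∈ A, Continuous f)
    (C : ℝ) (hbd : ∀ f ∈ A, ∀ x, |f x| ≤ C)
    (hdl : ∀ (f : ℕ → X → ℝ), (∀ m, f m ∈ A) →
        ∀ (x : ℕ → X), (∀ n, x n ∈ X₀) →
        ∀ (c d : ℕ → ℝ) (r s : ℝ),
          (∀ n, Tendsto (fun m => f m (x n)) atTop (𝓝 (c n))) →
          Tendsto c atTop (𝓝 r) →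
          (∀ m, Tendsto (fun n => f m (x n)) atTop (𝓝 (d m))) →
          Tendsto d atTop (𝓝 s) →
          r = s) :
    IsCompact (closure A) ∧ ∀ g ∈ closure A, Continuous g :=
  ⟨(isCompact_univ_pi fun _ => isCompact_Icc).of_isClosed_subset isClosed_closure
      (closure_subset_univ_pi_Icc hbd),
    fun _ hg => continuous_of_forall_tendsto_nhdsWithin_of_dense hX₀
      (tendsto_nhdsWithin_of_mem_closure_of_doubleLimitCondition hcont hbd hdl hg)⟩

/-- Compactness corollary of Grothendieck's double limit theorem:
if the double limit condition holds for `A` relative to a dense set `X₀`,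
then the pointwise closure of `A` is compact and consists of continuous functions,
i.e. `A` is relatively compact in `C(X)` with the topology of pointwise convergence. -/
theorem relatively_compact_of_double_limit {X : Type*} [TopologicalSpace X] [CompactSpace X]
    [T2Space X]
    (X₀ : Set X) (hX₀ : Dense X₀)
    (A : Set (X → ℝ)) (hcont : ∀ f ∈ A, Continuous f)
    (C : ℝ) (hbd : ∀ f ∈ A, ∀ x, |f x| ≤ C)
    (hdl : ∀ (f : ℕ → X → ℝ), (∀ m, f m ∈ A) →
        ∀ (x : ℕ → X), (∀ n, x n ∈ X₀) →
        ∀ (c d : ℕ → ℝ) (r s : ℝ),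
          (∀ n, Tendsto (fun m => f m (x n)) atTop (𝓝 (c n))) →
          Tendsto c atTop (𝓝 r) →
          (∀ m, Tendsto (fun n => f m (x n)) atTop (𝓝 (d m))) →
          Tendsto d atTop (𝓝 s) →
          r = s) :
    IsCompact (closure A) ∧ ∀ g ∈ closure A, Continuous g :=
  relatively_compact_of_double_limit_general X₀ hX₀ A hcont C hbd hdl
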